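/- Lemma 1 (optimality of hard partitions): suppose every entry of the channel matrix A is strictly positive. Then for every row-stochastic quantizer Q : Fin M → Fin K → ℝ there exists a deterministic quantizer Q' (i.e., for each m there is a unique k with Q' m k = 1 and Q' m k' = 0 for k' ≠ k) with J(Q') ≤ J(Q). Consequently, if the minimum of J over row-stochastic matrices is attained, it is attained at a deterministic quantizer. -/

import Mathlib

def simplex (N : ℕ) : Set (Fin N → ℝ) := {q | (∀ n, 0 ≤ q n) ∧ ∑ n, q n = 1}

/-- `f` is concave on the standard probability simplex. -/
def ConcaveOnSimplex {N : ℕ} (f : (Fin N → ℝ) → ℝ) : Prop :=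
  ∀ a ∈ simplex N, ∀ b ∈ simplex N, ∀ lam : ℝ, lam ∈ Set.Icc (0:ℝ) 1 →
    lam * f a + (1 - lam) * f b ≤ f (lam • a + (1 - lam) • b)

/-- The impurity functional `F(v) = (∑ n, v n) * f (v / ∑ n, v n)`. -/
noncomputable def impurity {N : ℕ} (f : (Fin N → ℝ) → ℝ) (v : Fin N → ℝ) : ℝ :=
  (∑ n, v n) * f (fun n => v n / ∑ m, v m)

/-- A joint distribution on `Fin N × Fin M`. -/
def IsJointDist {N M : ℕ} (p : Fin N → Fin M → ℝ) : Prop :=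
  (∀ n m, 0 ≤ p n m) ∧ ∑ n, ∑ m, p n m = 1

/-- A row-stochastic matrix. -/
def RowStochastic {M K : ℕ} (Q : Fin M → Fin K → ℝ) : Prop :=
  (∀ m k, 0 ≤ Q m k) ∧ ∀ m, ∑ k, Q m k = 1

/-- Marginal of the data `Y`: `p_{Y_m} = ∑ n, p n m`. -/
noncomputable def pY {N M : ℕ} (p : Fin N → Fin M → ℝ) (m : Fin M) : ℝ := ∑ n, p n m

/-- Joint distribution of the source and the quantizer output. -/
noncomputable def pXZ {N M K : ℕ} (p : Fin N → Fin M → ℝ) (Q : Fin M → Fin K → ℝ)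
    (n : Fin N) (k : Fin K) : ℝ := ∑ m, p n m * Q m k

/-- Marginal of the quantizer output. -/
noncomputable def pZ {N M K : ℕ} (p : Fin N → Fin M → ℝ) (Q : Fin M → Fin K → ℝ)
    (k : Fin K) : ℝ := ∑ n, pXZ p Q n k

/-- Joint distribution of the source and the channel output. -/
noncomputable def pXT {N M K H : ℕ} (p : Fin N → Fin M → ℝ) (Q : Fin M → Fin K → ℝ)
    (A : Fin K → Fin H → ℝ) (n : Fin N) (h : Fin H) : ℝ := ∑ k, pXZ p Q n k * A k h

/-- The objective `J(Q) = β ∑_h F(p_{XT}(·,h)) + ∑_k g_k(p_Z(k))`. -/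
noncomputable def J {N M K H : ℕ} (β : ℝ) (f : (Fin N → ℝ) → ℝ) (g : Fin K → ℝ → ℝ)
    (p : Fin N → Fin M → ℝ) (A : Fin K → Fin H → ℝ) (Q : Fin M → Fin K → ℝ) : ℝ :=
  β * ∑ h, impurity f (fun n => pXT p Q A n h) + ∑ k, g k (pZ p Q k)

/-- A deterministic (hard) quantizer. -/
def Deterministic {M K : ℕ} (Q : Fin M → Fin K → ℝ) : Prop :=
  ∀ m, ∃ k, Q m k = 1 ∧ ∀ k', k' ≠ k → Q m k' = 0

/-!
`J` is concave in `Q` on nonnegative matrices: `F` is the perspective of the concave `f`, hence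
positively homogeneous and superadditive, so concave on the nonnegative orthant; `p_{XT}(·,h)` and
`p_Z(k)` are linear in `Q`. Row-stochastic matrices form the convex hull of the deterministic ones
(a product of standard simplices), and a concave function on a convex hull is minimized at one of
its generators.
-/

open Finset

theorem concaveOn_finset_sum {ι E : Type*} [AddCommMonoid E] [Module ℝ E] {s : Set E}
    {t : Finset ι} {φ : ι → E → ℝ} (hs : Convex ℝ s) (hφ : ∀ i ∈ t, ConcaveOn ℝ s (φ i)) :
    ConcaveOn ℝ s fun x => ∑ i ∈ t, φ i x := by
  classical
  induction t using Finset.induction_on with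
  | empty => simpa using concaveOn_const (0 : ℝ) hs
  | insert i t hi ih =>
    simp only [sum_insert hi]
    exact (hφ i (mem_insert_self i t)).add (ih fun j hj => hφ j (mem_insert_of_mem hj))

section Impurity

variable {N : ℕ} {f : (Fin N → ℝ) → ℝ}

theorem impurity_smul (f : (Fin N → ℝ) → ℝ) {c : ℝ} (hc : 0 ≤ c) (v : Fin N → ℝ) :
    impurity f (c • v) = c * impurity f v := by
  rcases hc.eq_or_lt with rfl | hc
  · simp [impurity]
  · simp only [impurity, Pi.smul_apply, smul_eq_mul, ← mul_sum, mul_div_mul_left _ _ hc.ne']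
    ring

theorem impurity_add_le (hf : ConcaveOnSimplex f) {u w : Fin N → ℝ} (hu : 0 ≤ u) (hw : 0 ≤ w) :
    impurity f u + impurity f w ≤ impurity f (u + w) := by
  set s := ∑ n, u n
  set t := ∑ n, w n
  rcases (sum_nonneg fun n _ => hu n : 0 ≤ s).eq_or_lt with hs | hs
  · obtain rfl : u = 0 := (Fintype.sum_eq_zero_iff_of_nonneg hu).1 hs.symm
    simp [impurity]
  rcases (sum_nonneg fun n _ => hw n : 0 ≤ t).eq_or_lt with ht | ht
  · obtain rfl : w = 0 := (Fintype.sum_eq_zero_iff_of_nonneg hw).1 ht.symm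
    simp [impurity]
  replace hs : 0 < s := hs
  replace ht : 0 < t := ht
  have hst : 0 < s + t := add_pos hs ht
  set lam := s / (s + t)
  have hu' : (fun n => u n / s) ∈ simplex N :=
    ⟨fun n => div_nonneg (hu n) hs.le, by rw [← sum_div, div_self hs.ne']⟩
  have hw' : (fun n => w n / t) ∈ simplex N :=
    ⟨fun n => div_nonneg (hw n) ht.le, by rw [← sum_div, div_self ht.ne']⟩
  have hlam : lam ∈ Set.Icc (0 : ℝ) 1 :=
    ⟨by positivity, (div_le_one hst).2 (by linarith)⟩
  have hsum : ∑ m, (u + w) m = s + t := sum_add_distrib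
  have hmix : lam • (fun n => u n / s) + (1 - lam) • (fun n => w n / t)
      = fun n => (u + w) n / ∑ m, (u + w) m := by
    rw [hsum]
    ext n
    simp only [Pi.add_apply, Pi.smul_apply, smul_eq_mul, lam]
    field_simp
    ring
  calc impurity f u + impurity f w
      = (s + t) * (lam * f (fun n => u n / s) + (1 - lam) * f (fun n => w n / t)) := by
        simp only [impurity, lam]
        field_simp
        ring
    _ ≤ (s + t) * f (fun n => (u + w) n / ∑ m, (u + w) m) := by
        rw [← hmix]
        exact mul_le_mul_of_nonneg_left (hf _ hu' _ hw' lam hlam) hst.le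
    _ = impurity f (u + w) := by rw [impurity, hsum]

theorem concaveOn_impurity (hf : ConcaveOnSimplex f) :
    ConcaveOn ℝ (Set.Ici 0) (impurity f) :=
  ⟨convex_Ici 0, fun x hx y hy a b ha hb _ => by
    rw [smul_eq_mul, smul_eq_mul, ← impurity_smul f ha, ← impurity_smul f hb]
    exact impurity_add_le hf (smul_nonneg ha hx) (smul_nonneg hb hy)⟩

end Impurity

section Objective

variable {N M K H : ℕ}

noncomputable def pXTLinearMap (p : Fin N → Fin M → ℝ) (A : Fin K → Fin H → ℝ) (h : Fin H) :
    (Fin M → Fin K → ℝ) →ₗ[ℝ] (Fin N → ℝ) where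
  toFun Q n := pXT p Q A n h
  map_add' Q R := by
    ext n
    simp only [pXT, pXZ, Pi.add_apply, mul_add, add_mul, sum_add_distrib]
  map_smul' c Q := by
    ext n
    simp only [pXT, pXZ, Pi.smul_apply, smul_eq_mul, RingHom.id_apply, mul_sum, sum_mul]
    exact sum_congr rfl fun k _ => sum_congr rfl fun m _ => by ring

noncomputable def pZLinearMap (p : Fin N → Fin M → ℝ) (k : Fin K) :
    (Fin M → Fin K → ℝ) →ₗ[ℝ] ℝ where
  toFun Q := pZ p Q k
  map_add' Q R := by
    simp only [pZ, pXZ, Pi.add_apply, mul_add, sum_add_distrib]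
  map_smul' c Q := by
    simp only [pZ, pXZ, Pi.smul_apply, smul_eq_mul, RingHom.id_apply, mul_sum]
    exact sum_congr rfl fun n _ => sum_congr rfl fun m _ => by ring

theorem pXTLinearMap_nonneg {p : Fin N → Fin M → ℝ} {A : Fin K → Fin H → ℝ}
    (hp : ∀ n m, 0 ≤ p n m) (hA : ∀ k h, 0 ≤ A k h) (h : Fin H) {Q : Fin M → Fin K → ℝ}
    (hQ : 0 ≤ Q) : 0 ≤ pXTLinearMap p A h Q := fun n => show 0 ≤ pXT p Q A n h from
  sum_nonneg fun k _ => mul_nonneg (sum_nonneg fun m _ => mul_nonneg (hp n m) (hQ m k)) (hA k h)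

theorem concaveOn_J {β : ℝ} (hβ : 0 ≤ β) {f : (Fin N → ℝ) → ℝ} {g : Fin K → ℝ → ℝ}
    {p : Fin N → Fin M → ℝ} {A : Fin K → Fin H → ℝ} (hp : ∀ n m, 0 ≤ p n m)
    (hA : ∀ k h, 0 ≤ A k h) (hf : ConcaveOnSimplex f) (hg : ∀ k, ConcaveOn ℝ Set.univ (g k)) :
    ConcaveOn ℝ (Set.Ici 0) (J β f g p A) := by
  have hF : ∀ h, ConcaveOn ℝ (Set.Ici 0) fun Q => impurity f (pXTLinearMap p A h Q) := fun h =>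
    ((concaveOn_impurity hf).comp_linearMap _).subset
      (fun _ hQ => pXTLinearMap_nonneg hp hA h hQ) (convex_Ici 0)
  have hG : ∀ k, ConcaveOn ℝ (Set.Ici 0) fun Q => g k (pZLinearMap p k Q) := fun k =>
    ((hg k).comp_linearMap _).subset (Set.subset_univ _) (convex_Ici 0)
  exact ((concaveOn_finset_sum (convex_Ici 0) fun h _ => hF h).smul hβ).add
    (concaveOn_finset_sum (convex_Ici 0) fun k _ => hG k)

end Objective

section Deterministic

variable {M K : ℕ}

theorem Deterministic.nonneg {Q : Fin M → Fin K → ℝ} (hQ : Deterministic Q) : 0 ≤ Q := by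
  intro m k
  obtain ⟨k₀, h₁, h₀⟩ := hQ m
  by_cases hk : k = k₀
  · simp [hk, h₁]
  · simp [h₀ k hk]

theorem RowStochastic.mem_convexHull_deterministic {Q : Fin M → Fin K → ℝ}
    (hQ : RowStochastic Q) : Q ∈ convexHull ℝ {Q : Fin M → Fin K → ℝ | Deterministic Q} := by
  have hvertices : Set.univ.pi (fun _ : Fin M => Set.range fun k j : Fin K =>
      if k = j then (1 : ℝ) else 0) ⊆ {Q | Deterministic Q} := by
    intro Q hQ m
    obtain ⟨k, hk⟩ := hQ m trivial
    exact ⟨k, by simp [← hk], fun k' hk' => by simp [← hk, Ne.symm hk']⟩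
  refine convexHull_mono hvertices ?_
  rw [convexHull_pi]
  intro m _
  rw [convexHull_basis_eq_stdSimplex]
  exact ⟨hQ.1 m, hQ.2 m⟩

end Deterministic

theorem stmt_9_general {N M K H : ℕ}
    (β : ℝ) (hβ : 0 < β)
    (p : Fin N → Fin M → ℝ) (hp : IsJointDist p)
    (A : Fin K → Fin H → ℝ) (hApos : ∀ k h, 0 < A k h)
    (f : (Fin N → ℝ) → ℝ) (hf : ConcaveOnSimplex f)
    (g : Fin K → ℝ → ℝ) (hg : ∀ k, ConcaveOn ℝ Set.univ (g k)) :
    (∀ Q : Fin M → Fin K → ℝ, RowStochastic Q →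
      ∃ Q' : Fin M → Fin K → ℝ, Deterministic Q' ∧ J β f g p A Q' ≤ J β f g p A Q) ∧
    ((∃ Q₀ : Fin M → Fin K → ℝ, RowStochastic Q₀ ∧
        ∀ Q : Fin M → Fin K → ℝ, RowStochastic Q → J β f g p A Q₀ ≤ J β f g p A Q) →
      ∃ Q' : Fin M → Fin K → ℝ, Deterministic Q' ∧
        ∀ Q : Fin M → Fin K → ℝ, RowStochastic Q → J β f g p A Q' ≤ J β f g p A Q) := by
  have hJ := concaveOn_J hβ.le hp.1 (fun k h => (hApos k h).le) hf hg
  have hard : ∀ Q : Fin M → Fin K → ℝ, RowStochastic Q →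
      ∃ Q' : Fin M → Fin K → ℝ, Deterministic Q' ∧ J β f g p A Q' ≤ J β f g p A Q :=
    fun Q hQ => hJ.exists_le_of_mem_convexHull (fun _ => Deterministic.nonneg)
      hQ.mem_convexHull_deterministic
  refine ⟨hard, ?_⟩
  rintro ⟨Q₀, hQ₀, hmin⟩
  obtain ⟨Q', hdet, hle⟩ := hard Q₀ hQ₀
  exact ⟨Q', hdet, fun Q hQ => hle.trans (hmin Q hQ)⟩

/-- Lemma 1: optimality of hard partitions. -/
theorem stmt_9 {N M K H : ℕ}
    (β : ℝ) (hβ : 0 < β)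
    (p : Fin N → Fin M → ℝ) (hp : IsJointDist p)
    (A : Fin K → Fin H → ℝ) (hA : RowStochastic A) (hApos : ∀ k h, 0 < A k h)
    (f : (Fin N → ℝ) → ℝ) (hf : ConcaveOnSimplex f)
    (g : Fin K → ℝ → ℝ) (hg : ∀ k, ConcaveOn ℝ Set.univ (g k)) :
    (∀ Q : Fin M → Fin K → ℝ, RowStochastic Q →
      ∃ Q' : Fin M → Fin K → ℝ, Deterministic Q' ∧ J β f g p A Q' ≤ J β f g p A Q) ∧
    ((∃ Q₀ : Fin M → Fin K → ℝ, RowStochastic Q₀ ∧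
        ∀ Q : Fin M → Fin K → ℝ, RowStochastic Q → J β f g p A Q₀ ≤ J β f g p A Q) →
      ∃ Q' : Fin M → Fin K → ℝ, Deterministic Q' ∧
        ∀ Q : Fin M → Fin K → ℝ, RowStochastic Q → J β f g p A Q' ≤ J β f g p A Q) :=
  stmt_9_general β hβ p hp A hApos f hf g hg
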